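/- Fix a real number t ≠ 0 and for a Schwartz function f : ℝ → ℂ define (K_t f)(x) = (4πti)^{-1/2} e^{ix²/(4t)} ∫_ℝ e^{-ixy/(2t)} e^{iy²/(4t)} f(y) dy, where (4πti)^{-1/2} is the principal branch of the square root. Then for every Schwartz function f, the function K_t f is differentiable and the intertwining identity K_t( (y f(y) - f'(y))/√2 )(x) = ( x (K_t f)(x) + (2ti - 1) (K_t f)'(x) )/√2 holds for all x ∈ ℝ; that is, K_t ∘ a⁺ = b⁺ ∘ K_t, where (a⁺f)(y) = (y f(y) - f'(y))/√2 is the harmonic-oscillator creation operator and (b⁺g)(x) = (x g(x) + (2ti-1) g'(x))/√2. -/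

import Mathlib

/-! Writing `χ(y) = e^{iy²/(4t)}`, the transform is
`K_t u (x) = (4πti)^{-1/2} χ(x) 𝓕(χ u)(x / (4πt))`.
Differentiating under the Fourier transform expresses `(K_t f)'` through `𝓕(χ f)` and
`𝓕(χ · y f)`; integrating by parts with `(χ f)' = χ (iy/(2t) f + f')` expresses `𝓕(χ f')` through
the same two transforms, and the intertwining identity is then an algebraic identity in them. -/

open MeasureTheory

noncomputable section

/-- The integral transform
`(K_t f)(x) = (4πti)^{-1/2} e^{ix²/(4t)} ∫_ℝ e^{-ixy/(2t)} e^{iy²/(4t)} f(y) dy`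
(principal branch of the square root). -/
def fresnelK (t : ℝ) (f : ℝ → ℂ) (x : ℝ) : ℂ :=
  (4 * (Real.pi : ℂ) * (t : ℂ) * Complex.I) ^ (-(1/2 : ℂ)) *
    Complex.exp (Complex.I * (x : ℂ) ^ 2 / (4 * (t : ℂ))) *
    ∫ y : ℝ, Complex.exp (-(Complex.I * (x : ℂ) * (y : ℂ)) / (2 * (t : ℂ))) *
      Complex.exp (Complex.I * (y : ℂ) ^ 2 / (4 * (t : ℂ))) * f y

open Complex FourierTransform
open scoped Real

def chirp (t y : ℝ) : ℂ := cexp (I * y ^ 2 / (4 * t))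

lemma norm_chirp (t y : ℝ) : ‖chirp t y‖ = 1 := by
  rw [chirp, show I * (y : ℂ) ^ 2 / (4 * t) = ((y ^ 2 / (4 * t) : ℝ) : ℂ) * I by push_cast; ring]
  exact norm_exp_ofReal_mul_I _

lemma continuous_chirp (t : ℝ) : Continuous (chirp t) := by
  unfold chirp; fun_prop

lemma hasDerivAt_chirp (t y : ℝ) : HasDerivAt (chirp t) (I * y / (2 * t) * chirp t y) y := by
  have h : HasDerivAt (fun z : ℂ => I * z ^ 2 / (4 * t)) (I * y / (2 * t)) y :=
    (((hasDerivAt_pow 2 (y : ℂ)).const_mul I).div_const (4 * (t : ℂ))).congr_deriv (by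
      norm_num; ring)
  exact h.cexp.comp_ofReal.congr_deriv (mul_comm _ _)

lemma MeasureTheory.Integrable.chirp_mul {u : ℝ → ℂ} (hu : Integrable u) (t : ℝ) :
    Integrable fun y => chirp t y * u y :=
  hu.bdd_mul (continuous_chirp t).aestronglyMeasurable (.of_forall fun y => (norm_chirp t y).le)

lemma hasDerivAt_chirp_mul {u : ℝ → ℂ} {y : ℝ} (hu : DifferentiableAt ℝ u y) (t : ℝ) :
    HasDerivAt (fun y => chirp t y * u y) (chirp t y * (I / (2 * t) * (y * u y) + deriv u y)) y :=
  ((hasDerivAt_chirp t y).mul hu.hasDerivAt).congr_deriv (by ring)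

namespace Real

variable {E : Type*} [NormedAddCommGroup E] [NormedSpace ℂ E]

lemma fourier_const_mul (c : ℂ) (u : ℝ → ℂ) (w : ℝ) :
    𝓕 (fun y => c * u y) w = c * 𝓕 u w := by
  simp only [fourier_real_eq_integral_exp_smul, smul_eq_mul, mul_left_comm _ c, integral_const_mul]

lemma fourier_sub {u v : ℝ → E} (hu : Integrable u) (hv : Integrable v) (w : ℝ) :
    𝓕 (fun y => u y - v y) w = 𝓕 u w - 𝓕 v w := by
  simp only [fourier_eq, smul_sub]
  exact integral_sub ((fourierIntegral_convergent_iff w).2 hu)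
    ((fourierIntegral_convergent_iff w).2 hv)

end Real

def chirpTransform (t : ℝ) (u : ℝ → ℂ) (x : ℝ) : ℂ :=
  𝓕 (fun y => chirp t y * u y) (x / (4 * π * t))

lemma fresnelK_eq_chirpTransform (t : ℝ) (u : ℝ → ℂ) (x : ℝ) :
    fresnelK t u x = (4 * π * t * I) ^ (-(1 / 2 : ℂ)) * chirp t x * chirpTransform t u x := by
  rw [fresnelK, chirpTransform, Real.fourier_real_eq_integral_exp_smul]
  congr 1
  refine integral_congr_ae (.of_forall fun y => ?_)
  simp only [smul_eq_mul, chirp, ← mul_assoc]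
  congr 3
  push_cast
  field_simp
  ring

lemma chirpTransform_sub {u v : ℝ → ℂ} (hu : Integrable u) (hv : Integrable v) (t x : ℝ) :
    chirpTransform t (fun y => u y - v y) x = chirpTransform t u x - chirpTransform t v x := by
  simp only [chirpTransform, mul_sub]
  exact Real.fourier_sub (hu.chirp_mul t) (hv.chirp_mul t) _

lemma chirpTransform_div_const (u : ℝ → ℂ) (c : ℂ) (t x : ℝ) :
    chirpTransform t (fun y => u y / c) x = chirpTransform t u x / c := by
  have hc : (fun y => chirp t y * (u y / c)) = fun y => c⁻¹ * (chirp t y * u y) := by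
    ext y; ring
  rw [chirpTransform, hc, Real.fourier_const_mul, chirpTransform, inv_mul_eq_div]

lemma hasDerivAt_chirpTransform {u : ℝ → ℂ} (hu : Integrable u)
    (hyu : Integrable fun y : ℝ => (y : ℂ) * u y) (t x : ℝ) :
    HasDerivAt (chirpTransform t u) (-(I / (2 * t)) * chirpTransform t (fun y => y * u y) x) x := by
  have hsmul : Integrable fun y : ℝ => y • (chirp t y * u y) :=
    (hyu.chirp_mul t).congr (.of_forall fun y => by simp only [real_smul]; ring)
  have hmoment : (fun y : ℝ => (-2 * π * I * y) • (chirp t y * u y))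
      = fun y => -2 * π * I * (chirp t y * (y * u y)) := by
    ext y; rw [smul_eq_mul]; ring
  refine ((Real.hasDerivAt_fourier (hu.chirp_mul t) hsmul _).scomp x
    ((hasDerivAt_id' x).div_const (4 * π * t))).congr_deriv ?_
  rw [hmoment, Real.fourier_const_mul, real_smul, ← chirpTransform]
  push_cast
  field_simp
  ring

lemma chirpTransform_deriv {u : ℝ → ℂ} (hu : Integrable u)
    (hyu : Integrable fun y : ℝ => (y : ℂ) * u y) (hdiff : Differentiable ℝ u)
    (hu' : Integrable (deriv u)) (t x : ℝ) :
    chirpTransform t (deriv u) x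
      = I * x / (2 * t) * chirpTransform t u x
        - I / (2 * t) * chirpTransform t (fun y => y * u y) x := by
  have hderiv : deriv (fun y => chirp t y * u y)
      = fun y => chirp t y * (I / (2 * t) * (y * u y) + deriv u y) :=
    funext fun y => (hasDerivAt_chirp_mul (hdiff y) t).deriv
  have hderiv_int : Integrable (deriv fun y => chirp t y * u y) := by
    rw [hderiv]; exact ((hyu.const_mul _).add hu').chirp_mul t
  have hchirp_deriv : (fun y => chirp t y * deriv u y)
      = fun y => deriv (fun y => chirp t y * u y) y - I / (2 * t) * (chirp t y * (y * u y)) := by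
    ext y; rw [hderiv]; ring
  rw [chirpTransform.eq_1 t (deriv u), hchirp_deriv,
    Real.fourier_sub hderiv_int ((hyu.chirp_mul t).const_mul _), Real.fourier_const_mul,
    Real.fourier_deriv (hu.chirp_mul t)
      (fun y => (hasDerivAt_chirp_mul (hdiff y) t).differentiableAt) hderiv_int]
  simp only [smul_eq_mul]
  rw [← chirpTransform, ← chirpTransform]
  push_cast
  field_simp
  ring

lemma hasDerivAt_fresnelK {u : ℝ → ℂ} (hu : Integrable u)
    (hyu : Integrable fun y : ℝ => (y : ℂ) * u y) (t x : ℝ) :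
    HasDerivAt (fresnelK t u)
      ((4 * π * t * I) ^ (-(1 / 2 : ℂ)) * chirp t x * (I * x / (2 * t) * chirpTransform t u x
        - I / (2 * t) * chirpTransform t (fun y => y * u y) x)) x := by
  rw [funext (fresnelK_eq_chirpTransform t u)]
  exact (((hasDerivAt_chirp t x).const_mul _).mul
    (hasDerivAt_chirpTransform hu hyu t x)).congr_deriv (by ring)

namespace SchwartzMap

lemma integrable_ofReal_mul (f : SchwartzMap ℝ ℂ) :
    Integrable fun y : ℝ => (y : ℂ) * f y :=
  (f.integrable_pow_mul volume 1).mono' (by fun_prop) (.of_forall fun y => by simp)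

lemma integrable_deriv (f : SchwartzMap ℝ ℂ) : Integrable (deriv f) := by
  rw [← funext (derivCLM_apply ℝ f)]
  exact (derivCLM ℝ ℂ f).integrable

end SchwartzMap

/-- For `t ≠ 0` and `f` Schwartz, `K_t f` is differentiable and
`K_t ∘ a⁺ = b⁺ ∘ K_t`, where `(a⁺f)(y) = (y f(y) - f'(y))/√2` is the creation operator and
`(b⁺g)(x) = (x g(x) + (2ti-1) g'(x))/√2`. -/
theorem fresnelK_intertwines_creation (t : ℝ) (ht : t ≠ 0) (f : SchwartzMap ℝ ℂ) :
    Differentiable ℝ (fresnelK t f) ∧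
    ∀ x : ℝ,
      fresnelK t (fun y : ℝ => ((y : ℂ) * f y - deriv (⇑f) y) / (Real.sqrt 2 : ℂ)) x
        = ((x : ℂ) * fresnelK t f x
            + (2 * (t : ℂ) * Complex.I - 1) * deriv (fresnelK t f) x) / (Real.sqrt 2 : ℂ) := by
  have hf : Integrable f := f.integrable
  have hyf := f.integrable_ofReal_mul
  have hf' := f.integrable_deriv
  refine ⟨fun x => (hasDerivAt_fresnelK hf hyf t x).differentiableAt, fun x => ?_⟩
  rw [(hasDerivAt_fresnelK hf hyf t x).deriv, fresnelK_eq_chirpTransform,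
    fresnelK_eq_chirpTransform, chirpTransform_div_const, chirpTransform_sub hyf hf',
    chirpTransform_deriv hf hyf f.differentiable hf']
  generalize (4 * π * t * I : ℂ) ^ (-(1 / 2 : ℂ)) * chirp t x = c
  generalize chirpTransform t f x = G
  generalize chirpTransform t (fun y => y * f y) x = G₁
  have htc : (t : ℂ) ≠ 0 := by exact_mod_cast ht
  field_simp
  linear_combination 2 * c * t * (G₁ - x * G) * I_sq
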